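/- Let A₁, A₂ be 2×2 upper-triangular complex matrices which are each diagonalisable but not simultaneously diagonalisable, each with spectral radius 1 and |det A₁| = |det A₂| = 1. Then there exist a sequence σ: ℕ → {1,2} and a nonzero vector v ∈ ℂ² such that lim inf_{n→∞} (1/n)‖A_{σ(n)}···A_{σ(1)} v‖ > 0. -/

import Mathlib

/-!
The products stay upper triangular with unimodular diagonal entries, so only the top-right
entry `t n` can grow. Group the steps in pairs: a pair contributes `A₁ * A₂` or `A₂ * A₁`,
which share the diagonal `(p, q)` and whose top-right entries differ by some `w`; `w = 0`
means that `A₁` and `A₂` commute, and commuting diagonalisable triangular matrices are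
simultaneously diagonalisable. With `η = q / p` on the unit circle, `‖t (2k)‖` is the norm of
`∑ j < k, η ^ j * u j`, where each `u j` may be chosen in `{u, u + w}`. Adding `w` exactly when
`re (η ^ j) ≥ 0` makes the component of this sum along `w` grow like `‖w‖ k / 4`, because
the geometric sums of `η` and of `η ^ 2` have real parts bounded below.
-/

/-- Product A_{σ(n)} ⋯ A_{σ(1)}. -/
noncomputable def prodW {N : ℕ} (A : Fin N → Matrix (Fin 2) (Fin 2) ℂ) (σ : ℕ → Fin N) :
    ℕ → Matrix (Fin 2) (Fin 2) ℂ
  | 0 => 1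
  | n + 1 => A (σ (n + 1)) * prodW A σ n

open Finset Matrix Filter Topology ComplexConjugate

theorem spectrum_eq_range_diag_of_isUpperTriangular {K n : Type*} [Field K] [Fintype n]
    [DecidableEq n] [LinearOrder n] {A : Matrix n n K} (hA : A.IsUpperTriangular) :
    spectrum K A = Set.range A.diag := by
  ext r
  rw [mem_spectrum_iff_isRoot_charpoly, charpoly_of_isUpperTriangular A hA, Polynomial.IsRoot,
    Polynomial.eval_prod, Finset.prod_eq_zero_iff]
  simp [sub_eq_zero, eq_comm]

theorem isUpperTriangular_of_apply_one_zero {R : Type*} [Zero R] {A : Matrix (Fin 2) (Fin 2) R}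
    (h : A 1 0 = 0) : A.IsUpperTriangular := by
  intro i j hij
  fin_cases i <;> fin_cases j <;> simp_all

theorem norm_diag_eq_one_of_spectralRadius_eq_one {A : Matrix (Fin 2) (Fin 2) ℂ}
    (htri : A 1 0 = 0) (hsr : spectralRadius ℂ A = 1) (hdet : ‖A.det‖ = 1) :
    ‖A 0 0‖ = 1 ∧ ‖A 1 1‖ = 1 := by
  have hspec := spectrum_eq_range_diag_of_isUpperTriangular
    (isUpperTriangular_of_apply_one_zero htri)
  have hle : ∀ i, ‖A i i‖ ≤ 1 := fun i => by
    have : (‖A i i‖₊ : ENNReal) ≤ spectralRadius ℂ A :=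
      le_iSup₂ (f := fun k (_ : k ∈ spectrum ℂ A) => (‖k‖₊ : ENNReal)) (A i i)
        (hspec ▸ ⟨i, rfl⟩)
    rw [hsr] at this
    exact_mod_cast this
  have hprod : ‖A 0 0‖ * ‖A 1 1‖ = 1 := by
    rwa [det_fin_two, htri, mul_zero, sub_zero, norm_mul] at hdet
  constructor <;> nlinarith [hle 0, hle 1, norm_nonneg (A 0 0), norm_nonneg (A 1 1)]

theorem Matrix.IsDiag.eq_zero_of_mul_self_eq_zero {n R : Type*} [Fintype n] [DecidableEq n]
    [Semiring R] [NoZeroDivisors R] {D : Matrix n n R} (hD : D.IsDiag) (h : D * D = 0) :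
    D = 0 := by
  rw [← hD.diagonal_diag, diagonal_mul_diagonal] at h
  rw [← hD.diagonal_diag, diagonal_eq_zero]
  funext i
  exact mul_self_eq_zero.mp (congr_fun (diagonal_eq_zero.mp h) i)

theorem eq_smul_one_of_isDiag_conj {A : Matrix (Fin 2) (Fin 2) ℂ} (htri : A 1 0 = 0)
    (heq : A 0 0 = A 1 1)
    (hd : ∃ P : Matrix (Fin 2) (Fin 2) ℂ, IsUnit P.det ∧ (P⁻¹ * A * P).IsDiag) :
    A = A 0 0 • 1 := by
  obtain ⟨P, hP, hdiag⟩ := hd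
  set N := A - A 0 0 • 1
  have hN : N * N = 0 := by
    ext i j
    fin_cases i <;> fin_cases j <;> simp [N, mul_apply, Fin.sum_univ_two, htri, heq]
  have hconj : P⁻¹ * N * P = P⁻¹ * A * P - A 0 0 • 1 := by
    simp [N, mul_sub, sub_mul, nonsing_inv_mul P hP]
  have hconj_sq : P⁻¹ * N * P * (P⁻¹ * N * P) = 0 := by
    calc P⁻¹ * N * P * (P⁻¹ * N * P) = P⁻¹ * N * (P * P⁻¹) * N * P := by noncomm_ring
      _ = P⁻¹ * (N * N) * P := by rw [mul_nonsing_inv P hP]; noncomm_ring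
      _ = 0 := by rw [hN]; simp
  have h0 : P⁻¹ * N * P = 0 :=
    (hconj ▸ hdiag.sub (isDiag_smul_one _ _)).eq_zero_of_mul_self_eq_zero hconj_sq
  have hPu : IsUnit P := (isUnit_iff_isUnit_det P).mpr hP
  rw [hPu.mul_left_eq_zero, (isUnit_nonsing_inv_iff.mpr hPu).mul_right_eq_zero] at h0
  exact sub_eq_zero.mp h0

theorem commute_of_mul_apply_zero_one_eq {R : Type*} [CommRing R]
    {A B : Matrix (Fin 2) (Fin 2) R} (hA : A 1 0 = 0) (hB : B 1 0 = 0)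
    (h : (A * B) 0 1 = (B * A) 0 1) : Commute A B := by
  ext i j
  fin_cases i <;> fin_cases j
  · simp [mul_apply, Fin.sum_univ_two, hA, hB, mul_comm]
  · exact h
  · simp [mul_apply, Fin.sum_univ_two, hA, hB]
  · simp [mul_apply, Fin.sum_univ_two, hA, hB, mul_comm]

theorem exists_simultaneous_diag_of_commute {A₁ A₂ : Matrix (Fin 2) (Fin 2) ℂ}
    (htri₁ : A₁ 1 0 = 0) (htri₂ : A₂ 1 0 = 0)
    (hd₁ : ∃ P : Matrix (Fin 2) (Fin 2) ℂ, IsUnit P.det ∧ (P⁻¹ * A₁ * P).IsDiag)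
    (hd₂ : ∃ P : Matrix (Fin 2) (Fin 2) ℂ, IsUnit P.det ∧ (P⁻¹ * A₂ * P).IsDiag)
    (hc : Commute A₁ A₂) :
    ∃ P : Matrix (Fin 2) (Fin 2) ℂ, IsUnit P.det ∧
      (P⁻¹ * A₁ * P).IsDiag ∧ (P⁻¹ * A₂ * P).IsDiag := by
  by_cases heq : A₁ 0 0 = A₁ 1 1
  · obtain ⟨P, hP, hdiag⟩ := hd₂
    refine ⟨P, hP, ?_, hdiag⟩
    rw [eq_smul_one_of_isDiag_conj htri₁ heq hd₁, Matrix.mul_smul, Matrix.mul_one,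
      Matrix.smul_mul, nonsing_inv_mul P hP]
    exact isDiag_smul_one _ _
  · have h01 := congr_fun₂ hc.eq 0 1
    simp only [mul_apply, Fin.sum_univ_two] at h01
    set P : Matrix (Fin 2) (Fin 2) ℂ := !![1, A₁ 0 1; 0, A₁ 1 1 - A₁ 0 0]
    have hP : IsUnit P.det := by
      simpa [P, det_fin_two_of] using sub_ne_zero.mpr (Ne.symm heq)
    have hconj : ∀ A : Matrix (Fin 2) (Fin 2) ℂ, A * P = P * diagonal ![A 0 0, A 1 1] →
        (P⁻¹ * A * P).IsDiag := fun A h => by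
      rw [Matrix.mul_assoc, h, ← Matrix.mul_assoc, nonsing_inv_mul P hP, Matrix.one_mul]
      exact isDiag_diagonal _
    refine ⟨P, hP, hconj A₁ ?_, hconj A₂ ?_⟩ <;>
      ext i j <;> fin_cases i <;> fin_cases j <;>
      simp [P, mul_apply, Fin.sum_univ_two, htri₁, htri₂]
    · ring
    · ring
    · linear_combination -h01
    · ring

theorem norm_geom_sum_le {𝕜 : Type*} [NormedField 𝕜] {ζ : 𝕜} (hζ : ‖ζ‖ ≤ 1) (h1 : ζ ≠ 1)
    (n : ℕ) : ‖∑ j ∈ range n, ζ ^ j‖ ≤ 2 / ‖ζ - 1‖ := by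
  rw [geom_sum_eq h1, norm_div]
  gcongr
  calc ‖ζ ^ n - 1‖ ≤ ‖ζ ^ n‖ + ‖(1 : 𝕜)‖ := norm_sub_le _ _
    _ ≤ 2 := by rw [norm_pow, norm_one]; linarith [pow_le_one₀ (n := n) (norm_nonneg ζ) hζ]

theorem exists_neg_le_re_geom_sum {ζ : ℂ} (hζ : ‖ζ‖ ≤ 1) :
    ∃ C, ∀ n, -C ≤ (∑ j ∈ range n, ζ ^ j).re := by
  by_cases h1 : ζ = 1
  · exact ⟨0, fun n => by simp [h1]⟩
  · refine ⟨2 / ‖ζ - 1‖, fun n => ?_⟩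
    linarith [(abs_le.mp (Complex.abs_re_le_norm (∑ j ∈ range n, ζ ^ j))).1,
      norm_geom_sum_le hζ h1 n]

theorem exists_le_sum_max_re_pow {η : ℂ} (hη : ‖η‖ = 1) :
    ∃ C, ∀ n : ℕ, n / 4 - C ≤ ∑ j ∈ range n, max (η ^ j).re 0 := by
  obtain ⟨C₁, h₁⟩ := exists_neg_le_re_geom_sum hη.le
  obtain ⟨C₂, h₂⟩ := exists_neg_le_re_geom_sum (ζ := η ^ 2) (by simp [hη])
  refine ⟨(C₁ + C₂ / 2) / 2, fun n => ?_⟩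
  -- on the unit circle `(re z)² = (1 + re z²) / 2`, and `max x 0 ≥ (x + x²) / 2` for `|x| ≤ 1`
  have hpt : ∀ j, ((η ^ j).re + (1 + ((η ^ 2) ^ j).re) / 2) / 2 ≤ max (η ^ j).re 0 := by
    intro j
    have hz : (η ^ j).re ^ 2 + (η ^ j).im ^ 2 = 1 := by
      rw [sq, sq, ← Complex.normSq_apply, Complex.normSq_eq_norm_sq]; simp [hη]
    have hsq : ((η ^ 2) ^ j).re = (η ^ j).re ^ 2 - (η ^ j).im ^ 2 := by
      rw [← pow_mul, mul_comm, pow_mul, sq, Complex.mul_re]; ring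
    rw [hsq]
    rcases le_total 0 (η ^ j).re with h | h
    · rw [max_eq_left h]; nlinarith
    · rw [max_eq_right h]; nlinarith
  calc (n : ℝ) / 4 - (C₁ + C₂ / 2) / 2
      ≤ ((∑ j ∈ range n, η ^ j).re + (n + (∑ j ∈ range n, (η ^ 2) ^ j).re) / 2) / 2 := by
        linarith [h₁ n, h₂ n]
    _ = ∑ j ∈ range n, ((η ^ j).re + (1 + ((η ^ 2) ^ j).re) / 2) / 2 := by
        simp only [Complex.re_sum, ← sum_div, sum_add_distrib, sum_const, card_range,
          nsmul_eq_mul, mul_one]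
    _ ≤ _ := sum_le_sum fun j _ => hpt j

theorem exists_linear_lower_bound_norm_sum {η : ℂ} (hη : ‖η‖ = 1) {u : Fin 2 → ℂ}
    (hu : u 0 ≠ u 1) : ∃ τ : ℕ → Fin 2, ∃ δ > 0, ∃ C,
      ∀ n : ℕ, δ * n - C ≤ ‖∑ j ∈ range n, η ^ j * u (τ j)‖ := by
  by_cases h1 : η = 1
  · obtain ⟨i, hi⟩ : ∃ i, u i ≠ 0 := by
      by_contra! h
      exact hu (by rw [h 0, h 1])
    exact ⟨fun _ => i, ‖u i‖, norm_pos_iff.mpr hi, 0, fun n => by simp [h1, mul_comm]⟩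
  set w := u 1 - u 0
  have hw : 0 < ‖w‖ := norm_pos_iff.mpr (sub_ne_zero.mpr hu.symm)
  obtain ⟨C, hC⟩ := exists_le_sum_max_re_pow hη
  set τ : ℕ → Fin 2 := fun j => if 0 ≤ (η ^ j).re then 1 else 0
  refine ⟨τ, ‖w‖ / 4, by positivity, ‖u 0‖ * (2 / ‖η - 1‖) + ‖w‖ * C, fun n => ?_⟩
  have hterm : ∀ j, (conj w * (η ^ j * u (τ j))).re
      = (conj w * u 0 * η ^ j).re + ‖w‖ ^ 2 * max (η ^ j).re 0 := by
    intro j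
    by_cases h : 0 ≤ (η ^ j).re
    · have : u (τ j) = u 0 + w := by simp [τ, h, w]
      rw [this, max_eq_left h, ← Complex.re_ofReal_mul, Complex.ofReal_pow,
        ← Complex.conj_mul', ← Complex.add_re]
      ring_nf
    · simp only [τ, if_neg h, max_eq_right (not_le.mp h).le, mul_zero, add_zero]
      ring_nf
  have hdrift : (conj w * ∑ j ∈ range n, η ^ j * u (τ j)).re
      = (conj w * u 0 * ∑ j ∈ range n, η ^ j).re
        + ‖w‖ ^ 2 * ∑ j ∈ range n, max (η ^ j).re 0 := by
    simp only [mul_sum, Complex.re_sum, hterm, sum_add_distrib]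
  have hbase :
      -(‖w‖ * (‖u 0‖ * (2 / ‖η - 1‖))) ≤ (conj w * u 0 * ∑ j ∈ range n, η ^ j).re := by
    have hle := (abs_le.mp (Complex.abs_re_le_norm (conj w * u 0 * ∑ j ∈ range n, η ^ j))).1
    rw [norm_mul, norm_mul, Complex.norm_conj] at hle
    have := norm_geom_sum_le hη.le h1 n
    nlinarith [mul_le_mul_of_nonneg_left this (mul_nonneg hw.le (norm_nonneg (u 0))),
      norm_nonneg (u 0)]
  have hproj : (conj w * ∑ j ∈ range n, η ^ j * u (τ j)).re
      ≤ ‖w‖ * ‖∑ j ∈ range n, η ^ j * u (τ j)‖ := by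
    simpa [Complex.norm_conj] using
      Complex.re_le_norm (conj w * ∑ j ∈ range n, η ^ j * u (τ j))
  refine le_of_mul_le_mul_left ?_ hw
  nlinarith [mul_le_mul_of_nonneg_left (hC n) (sq_nonneg ‖w‖)]

theorem liminf_one_div_mul_pos {f : ℕ → ℝ} {δ C D E : ℝ} (hδ : 0 < δ)
    (hlow : ∀ n : ℕ, δ * n - C ≤ f n) (hup : ∀ n : ℕ, f n ≤ D * n + E) :
    0 < liminf (fun n : ℕ => 1 / (n : ℝ) * f n) atTop := by
  have hlim : ∀ a b : ℝ, Tendsto (fun n : ℕ => a + b / n) atTop (𝓝 a) := fun a b => by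
    simpa using tendsto_const_nhds.add (tendsto_const_div_atTop_nhds_zero_nat b)
  have hpos : ∀ᶠ n : ℕ in atTop, (0 : ℝ) < n :=
    (eventually_gt_atTop 0).mono fun n hn => Nat.cast_pos.mpr hn
  refine (half_pos hδ).trans_le (le_liminf_of_le ?_ ?_)
  · refine (isBoundedUnder_of_eventually_le (a := D + 1) ?_).isCoboundedUnder_ge
    filter_upwards [(hlim D E).eventually (gt_mem_nhds (lt_add_one D)), hpos] with n h hn
    calc 1 / (n : ℝ) * f n ≤ 1 / n * (D * n + E) := by gcongr; exact hup n
      _ = D + E / n := by field_simp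
      _ ≤ D + 1 := h.le
  · filter_upwards [(hlim δ (-C)).eventually (lt_mem_nhds (half_lt_self hδ)), hpos] with n h hn
    calc δ / 2 ≤ δ + -C / n := h.le
      _ = 1 / n * (δ * n - C) := by field_simp; ring
      _ ≤ 1 / n * f n := by gcongr; exact hlow n

theorem le_add_mul_of_abs_sub_le {f : ℕ → ℝ} {M : ℝ} (h : ∀ n, |f (n + 1) - f n| ≤ M)
    (n : ℕ) : f n ≤ f 0 + M * n := by
  induction n with
  | zero => simp
  | succ n ih => push_cast; linarith [(abs_le.mp (h n)).2]

theorem linear_lower_bound_of_even {f : ℕ → ℝ} {M δ C : ℝ} (hδ : 0 ≤ δ)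
    (h : ∀ n, |f (n + 1) - f n| ≤ M) (heven : ∀ k : ℕ, δ * k - C ≤ f (2 * k)) (n : ℕ) :
    δ / 2 * n - (C + M + δ) ≤ f n := by
  have hM : 0 ≤ M := (abs_nonneg _).trans (h 0)
  obtain ⟨k, rfl | rfl⟩ := Nat.even_or_odd' n
  · push_cast; linarith [heven k]
  · push_cast; linarith [heven k, (abs_le.mp (h (2 * k))).1]

theorem norm_toEuclideanLin_single_one_bounds (M : Matrix (Fin 2) (Fin 2) ℂ) :
    ‖M 0 1‖ ≤ ‖toEuclideanLin M (EuclideanSpace.single 1 1)‖ ∧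
      ‖toEuclideanLin M (EuclideanSpace.single 1 1)‖ ≤ ‖M 0 1‖ + ‖M 1 1‖ := by
  set x := toEuclideanLin M (EuclideanSpace.single 1 1)
  have hx : ∀ i, x i = M i 1 := fun i => by simp [x]
  constructor
  · simpa [hx] using PiLp.norm_apply_le x 0
  · rw [EuclideanSpace.norm_eq, Real.sqrt_le_left (by positivity), Fin.sum_univ_two, hx, hx]
    nlinarith [norm_nonneg (M 0 1), norm_nonneg (M 1 1)]

section prodW

variable {N : ℕ} (A : Fin N → Matrix (Fin 2) (Fin 2) ℂ) (σ : ℕ → Fin N)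

theorem prodW_apply_one_one (h : ∀ i, A i 1 0 = 0) (n : ℕ) :
    prodW A σ n 1 1 = ∏ j ∈ range n, A (σ (j + 1)) 1 1 := by
  induction n with
  | zero => simp [prodW]
  | succ n ih =>
    rw [prod_range_succ, ← ih]
    simp [prodW, mul_apply, Fin.sum_univ_two, h, mul_comm]

theorem norm_prodW_apply_one_one (h10 : ∀ i, A i 1 0 = 0) (h11 : ∀ i, ‖A i 1 1‖ = 1)
    (n : ℕ) : ‖prodW A σ n 1 1‖ = 1 := by
  rw [prodW_apply_one_one A σ h10, norm_prod]
  exact prod_eq_one fun j _ => h11 _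

theorem prodW_succ_apply_zero_one (n : ℕ) :
    prodW A σ (n + 1) 0 1 = A (σ (n + 1)) 0 0 * prodW A σ n 0 1
      + A (σ (n + 1)) 0 1 * prodW A σ n 1 1 := by
  simp [prodW, mul_apply, Fin.sum_univ_two]

theorem prodW_apply_zero_one_mul {p q : ℂ} (hp : p ≠ 0) (h10 : ∀ i, A i 1 0 = 0)
    (h00 : ∀ i, A i 0 0 = p) (h11 : ∀ i, A i 1 1 = q) (k : ℕ) :
    prodW A σ k 0 1 * p = p ^ k * ∑ j ∈ range k, (q / p) ^ j * A (σ (j + 1)) 0 1 := by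
  induction k with
  | zero => simp [prodW]
  | succ k ih =>
    rw [prodW_succ_apply_zero_one, prodW_apply_one_one A σ h10, sum_range_succ, mul_add, h00,
      add_mul, mul_assoc, ih]
    simp only [h11, prod_const, card_range, div_pow]
    field_simp
    ring

theorem abs_norm_prodW_succ_apply_zero_one_sub_le (h10 : ∀ i, A i 1 0 = 0)
    (h00 : ∀ i, ‖A i 0 0‖ = 1) (h11 : ∀ i, ‖A i 1 1‖ = 1) (n : ℕ) :
    |‖prodW A σ (n + 1) 0 1‖ - ‖prodW A σ n 0 1‖| ≤ ∑ i, ‖A i 0 1‖ := by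
  calc |‖prodW A σ (n + 1) 0 1‖ - ‖prodW A σ n 0 1‖|
      = |‖prodW A σ (n + 1) 0 1‖ - ‖A (σ (n + 1)) 0 0 * prodW A σ n 0 1‖| := by
        rw [norm_mul, h00, one_mul]
    _ ≤ ‖A (σ (n + 1)) 0 1 * prodW A σ n 1 1‖ := by
        simpa [prodW_succ_apply_zero_one] using abs_norm_sub_norm_le
          (prodW A σ (n + 1) 0 1) (A (σ (n + 1)) 0 0 * prodW A σ n 0 1)
    _ = ‖A (σ (n + 1)) 0 1‖ := by rw [norm_mul, norm_prodW_apply_one_one A σ h10 h11, mul_one]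
    _ ≤ ∑ i, ‖A i 0 1‖ := single_le_sum (fun i _ => norm_nonneg (A i 0 1)) (mem_univ _)

end prodW

/-- Steps `2k - 1` and `2k` apply `A (τ k).rev` and then `A (τ k)`. -/
def interleave (τ : ℕ → Fin 2) (n : ℕ) : Fin 2 :=
  if Even n then τ (n / 2) else (τ ((n + 1) / 2)).rev

theorem prodW_interleave (A : Fin 2 → Matrix (Fin 2) (Fin 2) ℂ) (τ : ℕ → Fin 2) (k : ℕ) :
    prodW A (interleave τ) (2 * k) = prodW (fun i => A i * A i.rev) τ k := by
  induction k with
  | zero => rfl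
  | succ k ih =>
    have hodd : interleave τ (2 * k + 1) = (τ (k + 1)).rev := by
      simp [interleave, show (2 * k + 1 + 1) / 2 = k + 1 by omega]
    have heven : interleave τ (2 * k + 1 + 1) = τ (k + 1) := by
      simp [interleave, show (2 * k + 1 + 1) / 2 = k + 1 by omega, Nat.even_add_one]
    rw [show 2 * (k + 1) = 2 * k + 1 + 1 by ring, prodW, prodW, prodW, ih, hodd, heven,
      Matrix.mul_assoc]

theorem norm_prodW_interleave_apply_zero_one (A : Fin 2 → Matrix (Fin 2) (Fin 2) ℂ)
    (h10 : ∀ i, A i 1 0 = 0) (h00 : ∀ i, ‖A i 0 0‖ = 1) (τ : ℕ → Fin 2) (k : ℕ) :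
    ‖prodW A (interleave τ) (2 * k) 0 1‖ = ‖∑ j ∈ range k, (A 0 1 1 * A 1 1 1 /
      (A 0 0 0 * A 1 0 0)) ^ j * (A (τ (j + 1)) * A (τ (j + 1)).rev) 0 1‖ := by
  set p := A 0 0 0 * A 1 0 0
  have hp : ‖p‖ = 1 := by simp [p, h00]
  have hpair : ∀ i : Fin 2, (A i * A i.rev) 1 0 = 0 ∧ (A i * A i.rev) 0 0 = p ∧
      (A i * A i.rev) 1 1 = A 0 1 1 * A 1 1 1 := by
    intro i
    fin_cases i <;> simp [p, mul_apply, Fin.sum_univ_two, h10, mul_comm]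
  have := prodW_apply_zero_one_mul (fun i => A i * A i.rev) τ
    (norm_ne_zero_iff.mp (hp ▸ one_ne_zero)) (fun i => (hpair i).1) (fun i => (hpair i).2.1)
    (fun i => (hpair i).2.2) k
  rw [prodW_interleave]
  simpa [hp] using congr_arg norm this

theorem exists_liminf_pos_of_not_commute (A : Fin 2 → Matrix (Fin 2) (Fin 2) ℂ)
    (h10 : ∀ i, A i 1 0 = 0) (h00 : ∀ i, ‖A i 0 0‖ = 1) (h11 : ∀ i, ‖A i 1 1‖ = 1)
    (hne : (A 0 * A 1) 0 1 ≠ (A 1 * A 0) 0 1) :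
    ∃ σ : ℕ → Fin 2, ∃ v : EuclideanSpace ℂ (Fin 2), v ≠ 0 ∧
      0 < liminf (fun n : ℕ => (1 : ℝ) / n * ‖toEuclideanLin (prodW A σ n) v‖) atTop := by
  obtain ⟨τ, δ, hδ, C, hC⟩ := exists_linear_lower_bound_norm_sum
    (η := A 0 1 1 * A 1 1 1 / (A 0 0 0 * A 1 0 0)) (by simp [h00, h11])
    (u := fun i => (A i * A i.rev) 0 1) hne
  set σ := interleave fun k => τ (k - 1)
  set f : ℕ → ℝ := fun n => ‖prodW A σ n 0 1‖
  have hstep := abs_norm_prodW_succ_apply_zero_one_sub_le A σ h10 h00 h11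
  have heven : ∀ k : ℕ, δ * k - C ≤ f (2 * k) := fun k => by
    simpa [f, σ, norm_prodW_interleave_apply_zero_one A h10 h00] using hC k
  have hbounds := fun n => norm_toEuclideanLin_single_one_bounds (prodW A σ n)
  refine ⟨σ, EuclideanSpace.single 1 1, by simp,
    liminf_one_div_mul_pos (D := ∑ i, ‖A i 0 1‖) (E := 1) (half_pos hδ)
      (fun n => (linear_lower_bound_of_even hδ.le hstep heven n).trans (hbounds n).1)
      (fun n => (hbounds n).2.trans ?_)⟩
  have hd := norm_prodW_apply_one_one A σ h10 h11 n
  have hf0 : ‖prodW A σ 0 0 1‖ = 0 := by simp [prodW]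
  linarith [le_add_mul_of_abs_sub_le (f := f) hstep n]

/-- for two upper-triangular, individually diagonalisable but not
simultaneously diagonalisable 2×2 complex matrices of spectral radius 1 and
unimodular determinant, some trajectory grows at least linearly. -/
theorem stmt15 (A₁ A₂ : Matrix (Fin 2) (Fin 2) ℂ)
    (htri₁ : A₁ 1 0 = 0) (htri₂ : A₂ 1 0 = 0)
    (hd₁ : ∃ P : Matrix (Fin 2) (Fin 2) ℂ, IsUnit P.det ∧ (P⁻¹ * A₁ * P).IsDiag)
    (hd₂ : ∃ P : Matrix (Fin 2) (Fin 2) ℂ, IsUnit P.det ∧ (P⁻¹ * A₂ * P).IsDiag)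
    (hnsd : ¬ ∃ P : Matrix (Fin 2) (Fin 2) ℂ, IsUnit P.det ∧
      (P⁻¹ * A₁ * P).IsDiag ∧ (P⁻¹ * A₂ * P).IsDiag)
    (hsr₁ : spectralRadius ℂ A₁ = 1) (hsr₂ : spectralRadius ℂ A₂ = 1)
    (hdet₁ : ‖A₁.det‖ = 1) (hdet₂ : ‖A₂.det‖ = 1) :
    ∃ σ : ℕ → Fin 2, ∃ v : EuclideanSpace ℂ (Fin 2), v ≠ 0 ∧
      0 < Filter.liminf
        (fun n : ℕ => (1 : ℝ) / n * ‖Matrix.toEuclideanLin (prodW ![A₁, A₂] σ n) v‖)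
        Filter.atTop := by
  have hdiag₁ := norm_diag_eq_one_of_spectralRadius_eq_one htri₁ hsr₁ hdet₁
  have hdiag₂ := norm_diag_eq_one_of_spectralRadius_eq_one htri₂ hsr₂ hdet₂
  have hne : (A₁ * A₂) 0 1 ≠ (A₂ * A₁) 0 1 := fun h => hnsd <|
    exists_simultaneous_diag_of_commute htri₁ htri₂ hd₁ hd₂
      (commute_of_mul_apply_zero_one_eq htri₁ htri₂ h)
  exact exists_liminf_pos_of_not_commute ![A₁, A₂]
    (by simp [Fin.forall_fin_two, htri₁, htri₂]) (by simp [Fin.forall_fin_two, hdiag₁, hdiag₂])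
    (by simp [Fin.forall_fin_two, hdiag₁, hdiag₂]) hne
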